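/- arXiv:math/0411378 — 2 statements merged into one kernel-verified Lean document; each statement's English description precedes it below -/
import Mathlib

section
/- Let G be a k-regular undirected graph on h vertices whose adjacency matrix A satisfies |λ| ≤ c < k for every eigenvalue λ of a nonconstant eigenvector. Then for any subset S of vertices, any starting vertex x, and any integer r ≥ log(2h/|S|^{1/2})/log(k/c), the number of walks of length r from x that end in S is at least (|S|/(2h))·k^r; equivalently, a uniformly random walk of length r from x lands in S with probability at least |S|/(2h). -/
open Matrix Finset

/-!
Split the indicator of `x` into its mean `h⁻¹ • 1` and a mean-zero part `w` with `‖w‖ ≤ 1`.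
By regularity `A ^ r` maps the mean to `k ^ r h⁻¹ • 1`, which contributes `|S| k ^ r / h` walks
ending in `S`. The mean-zero vectors form an `A`-invariant subspace on which the symmetric `A`
has all eigenvalues of absolute value at most `c`, so `‖A ^ r w‖ ≤ c ^ r`, and Cauchy–Schwarz
bounds the error over `S` by `√|S| c ^ r`. The hypothesis on `r` says exactly that this error is
at most `|S| k ^ r / (2h)`.
-/

section SymmetricOperator

variable {E : Type*} [NormedAddCommGroup E] [InnerProductSpace ℝ E] [FiniteDimensional ℝ E]
  {T : E →ₗ[ℝ] E} {c : ℝ}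

theorem LinearMap.IsSymmetric.norm_apply_le_of_forall_eigenvalue (hT : T.IsSymmetric)
    (hc : 0 ≤ c) (heig : ∀ v, v ≠ 0 → ∀ μ : ℝ, T v = μ • v → |μ| ≤ c) (x : E) :
    ‖T x‖ ≤ c * ‖x‖ := by
  set b := hT.eigenvectorBasis rfl
  have hsq : ‖T x‖ ^ 2 ≤ (c * ‖x‖) ^ 2 := by
    rw [← b.repr.norm_map, ← b.repr.norm_map x, EuclideanSpace.real_norm_sq_eq,
      mul_pow, EuclideanSpace.real_norm_sq_eq, mul_sum]
    gcongr with i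
    rw [hT.eigenvectorBasis_apply_self_apply, RCLike.ofReal_real_eq_id, id_eq, mul_pow,
      ← sq_abs (hT.eigenvalues rfl i)]
    gcongr
    exact heig (b i) (b.orthonormal.ne_zero i) _ (hT.apply_eigenvectorBasis rfl i)
  exact (sq_le_sq₀ (norm_nonneg _) (by positivity)).1 hsq

theorem LinearMap.IsSymmetric.norm_pow_apply_le_of_mapsTo (hT : T.IsSymmetric) (hc : 0 ≤ c)
    {W : Submodule ℝ E} (hW : ∀ w ∈ W, T w ∈ W)
    (heig : ∀ w ∈ W, w ≠ 0 → ∀ μ : ℝ, T w = μ • w → |μ| ≤ c) (r : ℕ) {w : E} (hw : w ∈ W) :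
    ‖(T ^ r) w‖ ≤ c ^ r * ‖w‖ := by
  have hstep : ∀ v ∈ W, ‖T v‖ ≤ c * ‖v‖ := fun v hv =>
    (hT.restrict_invariant hW).norm_apply_le_of_forall_eigenvalue hc
      (fun u hu μ hμ => heig u u.2 (by simpa using hu) μ (congrArg Subtype.val hμ)) ⟨v, hv⟩
  induction r with
  | zero => simp
  | succ r ih =>
    calc ‖(T ^ (r + 1)) w‖ = ‖T ((T ^ r) w)‖ := by rw [pow_succ', Module.End.mul_apply]
      _ ≤ c * ‖(T ^ r) w‖ := hstep _ (Module.End.pow_apply_mem_of_forall_mem r hW w hw)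
      _ ≤ c ^ (r + 1) * ‖w‖ := by
        rw [pow_succ', mul_assoc]; exact mul_le_mul_of_nonneg_left ih hc

end SymmetricOperator

section RegularMatrix

variable {V : Type*} [Fintype V] {A : Matrix V V ℝ} {k c : ℝ}

variable (V) in
def sumZeroSubspace : Submodule ℝ (EuclideanSpace ℝ V) where
  carrier := {v | ∑ i, v i = 0}
  add_mem' hv hw := by simp_all [sum_add_distrib]
  zero_mem' := by simp
  smul_mem' a v hv := by simp_all [← mul_sum]

theorem Matrix.sum_mulVec_of_sum_col (hcol : ∀ j, ∑ i, A i j = k) (v : V → ℝ) :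
    ∑ i, (A *ᵥ v) i = k * ∑ i, v i := by
  simp only [mulVec, dotProduct, mul_sum]
  rw [sum_comm]
  simp_rw [← sum_mul, hcol]

theorem Matrix.pow_mulVec_const_of_sum_row [DecidableEq V] (hreg : ∀ i, ∑ j, A i j = k)
    (r : ℕ) (a : ℝ) : (A ^ r) *ᵥ (fun _ => a) = fun _ => k ^ r * a := by
  induction r with
  | zero => ext; simp
  | succ r ih =>
    rw [pow_succ', ← mulVec_mulVec, ih]
    ext i
    simp only [mulVec, dotProduct, ← sum_mul, hreg, pow_succ', mul_assoc]

theorem Matrix.norm_toEuclideanLin_pow_le [DecidableEq V] (hsymm : A.IsSymm)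
    (hreg : ∀ i, ∑ j, A i j = k) (hc : 0 ≤ c)
    (heig : ∀ (v : V → ℝ) (lam : ℝ), (∑ i, v i) = 0 → v ≠ 0 →
      A.mulVec v = lam • v → |lam| ≤ c)
    (r : ℕ) {w : EuclideanSpace ℝ V} (hw : w ∈ sumZeroSubspace V) :
    ‖toEuclideanLin (A ^ r) w‖ ≤ c ^ r * ‖w‖ := by
  have hT : (toEuclideanLin A).IsSymmetric :=
    isSymmetric_toEuclideanLin_iff.2 (isHermitian_iff_isSymm.2 hsymm)
  have hcol : ∀ j, ∑ i, A i j = k := fun j => by simpa only [hsymm.apply] using hreg j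
  rw [toLpLin_pow]
  refine hT.norm_pow_apply_le_of_mapsTo hc (fun v hv => ?_) (fun v hv hv0 μ hμ => ?_) r hw
  · change ∑ i, (A *ᵥ v.ofLp) i = 0
    rw [sum_mulVec_of_sum_col hcol, show ∑ i, v i = 0 from hv, mul_zero]
  · exact heig v.ofLp μ hv (by simpa using hv0) (congrArg WithLp.ofLp hμ)

end RegularMatrix

theorem EuclideanSpace.abs_sum_le_sqrt_card_mul_norm {V : Type*} [Fintype V] (S : Finset V)
    (u : EuclideanSpace ℝ V) : |∑ s ∈ S, u s| ≤ √(#S : ℝ) * ‖u‖ := by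
  rw [← Real.sqrt_sq (norm_nonneg u), ← Real.sqrt_mul (Nat.cast_nonneg _)]
  apply Real.abs_le_sqrt
  calc (∑ s ∈ S, u s) ^ 2 ≤ #S * ∑ s ∈ S, u s ^ 2 := sq_sum_le_card_mul_sum_sq
    _ ≤ #S * ∑ s, u s ^ 2 := by gcongr; exact S.subset_univ
    _ = #S * ‖u‖ ^ 2 := by rw [EuclideanSpace.real_norm_sq_eq]

theorem Matrix.abs_sum_pow_apply_sub_le {V : Type*} [Fintype V] [DecidableEq V]
    {A : Matrix V V ℝ} {k c : ℝ} (hsymm : A.IsSymm)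
    (hreg : ∀ i, ∑ j, A i j = k) (hc : 0 ≤ c)
    (heig : ∀ (v : V → ℝ) (lam : ℝ), (∑ i, v i) = 0 → v ≠ 0 →
      A.mulVec v = lam • v → |lam| ≤ c)
    (S : Finset V) (x : V) (r : ℕ) :
    |∑ s ∈ S, (A ^ r) s x - #S * k ^ r / (Fintype.card V : ℝ)| ≤ √(#S : ℝ) * c ^ r := by
  set h : ℝ := (Fintype.card V : ℝ) with h_def
  have hh : 0 < h := Nat.cast_pos.2 (Fintype.card_pos_iff.2 ⟨x⟩)
  set w : EuclideanSpace ℝ V := WithLp.toLp 2 (Pi.single x 1 - fun _ => h⁻¹)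
  have hw : w ∈ sumZeroSubspace V := by
    change ∑ i, (Pi.single x 1 - fun _ => h⁻¹ : V → ℝ) i = 0
    simp [sum_sub_distrib, h, hh.ne']
  have hw1 : ‖w‖ ≤ 1 := by
    have : ‖w‖ ^ 2 = 1 - h⁻¹ := by
      rw [EuclideanSpace.real_norm_sq_eq]
      change ∑ i, ((Pi.single x 1 : V → ℝ) i - h⁻¹) ^ 2 = _
      have hsum : ∑ i, (Pi.single x 1 : V → ℝ) i = 1 := by simp
      have hsum_sq : ∑ i, (Pi.single x 1 : V → ℝ) i ^ 2 = 1 := by simp [Pi.single_apply]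
      simp only [sub_sq, sum_add_distrib, sum_sub_distrib, ← sum_mul, ← mul_sum, sum_const,
        card_univ, nsmul_eq_mul, ← h_def, hsum, hsum_sq]
      field_simp
      ring
    nlinarith [norm_nonneg w, inv_pos.2 hh]
  have hsplit : ∑ s ∈ S, (A ^ r) s x - #S * k ^ r / h = ∑ s ∈ S, toEuclideanLin (A ^ r) w s := by
    have happly : ∀ s, toEuclideanLin (A ^ r) w s = (A ^ r) s x - k ^ r * h⁻¹ := fun s => by
      change ((A ^ r) *ᵥ (Pi.single x 1 - fun _ => h⁻¹)) s = _
      rw [mulVec_sub, mulVec_single_one, pow_mulVec_const_of_sum_row hreg]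
      rfl
    simp_rw [happly, sum_sub_distrib, sum_const, nsmul_eq_mul]
    ring
  calc |∑ s ∈ S, (A ^ r) s x - #S * k ^ r / h|
      = |∑ s ∈ S, toEuclideanLin (A ^ r) w s| := by rw [hsplit]
    _ ≤ √(#S : ℝ) * ‖toEuclideanLin (A ^ r) w‖ :=
      EuclideanSpace.abs_sum_le_sqrt_card_mul_norm _ _
    _ ≤ √(#S : ℝ) * (c ^ r * ‖w‖) := by
      gcongr; exact norm_toEuclideanLin_pow_le hsymm hreg hc heig r hw
    _ ≤ √(#S : ℝ) * c ^ r := by gcongr; exact mul_le_of_le_one_right (by positivity) hw1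

theorem Real.le_pow_of_log_div_log_le {a b : ℝ} {r : ℕ} (ha : 0 < a) (hb : 1 < b)
    (hr : Real.log a / Real.log b ≤ r) : a ≤ b ^ r := by
  rwa [Real.le_pow_iff_log_le ha (by linarith), ← div_le_iff₀ (Real.log_pos hb)]

theorem stmt_0_general {V : Type*} [Fintype V] [DecidableEq V]
    (A : Matrix V V ℝ) (k c : ℝ)
    (hsymm : A.IsSymm)
    (hreg : ∀ i, ∑ j, A i j = k)
    (hc : 0 < c) (hck : c < k)
    (heig : ∀ (v : V → ℝ) (lam : ℝ), (∑ i, v i) = 0 → v ≠ 0 →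
      A.mulVec v = lam • v → |lam| ≤ c)
    (S : Finset V) (x : V) (r : ℕ)
    (hr : Real.log (2 * (Fintype.card V : ℝ) / Real.sqrt (S.card : ℝ)) /
        Real.log (k / c) ≤ (r : ℝ)) :
    (S.card : ℝ) / (2 * (Fintype.card V : ℝ)) * k ^ r ≤ ∑ s ∈ S, (A ^ r) s x := by
  rcases S.eq_empty_or_nonempty with rfl | hS
  · simp
  set h : ℝ := (Fintype.card V : ℝ)
  have hh : 0 < h := Nat.cast_pos.2 (Fintype.card_pos_iff.2 ⟨x⟩)
  have hS' : (0 : ℝ) < #S := Nat.cast_pos.2 hS.card_pos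
  have hsqrt : 0 < √(#S : ℝ) := Real.sqrt_pos.2 hS'
  have hratio : 2 * h / √(#S : ℝ) ≤ (k / c) ^ r :=
    Real.le_pow_of_log_div_log_le (by positivity) ((one_lt_div hc).2 hck) hr
  have hgap : √(#S : ℝ) * c ^ r ≤ #S * k ^ r / (2 * h) := by
    rw [div_pow, div_le_div_iff₀ hsqrt (pow_pos hc r)] at hratio
    rw [le_div_iff₀ (by positivity)]
    calc √(#S : ℝ) * c ^ r * (2 * h) = √(#S : ℝ) * (2 * h * c ^ r) := by ring
      _ ≤ √(#S : ℝ) * (k ^ r * √(#S : ℝ)) := by gcongr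
      _ = #S * k ^ r := by rw [mul_left_comm, Real.mul_self_sqrt hS'.le, mul_comm]
  have hmix := (abs_le.1 (Matrix.abs_sum_pow_apply_sub_le hsymm hreg hc.le heig S x r)).1
  have hsplit : #S / (2 * h) * k ^ r = #S * k ^ r / h - #S * k ^ r / (2 * h) := by
    field_simp; ring
  linarith

/-- Rapid mixing on a `k`-regular graph (Proposition 1 of Jao–Miller–Venkatesan):
if every eigenvalue attached to a nonconstant (i.e. mean-zero) eigenvector is at most `c < k`
in absolute value, then for any vertex subset `S`, any start vertex `x`, and any walk length
`r ≥ log(2h/√|S|)/log(k/c)`, the number of walks of length `r` from `x` ending in `S`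
is at least `(|S|/(2h))·k^r`. -/
theorem stmt_0 {V : Type*} [Fintype V] [DecidableEq V]
    (A : Matrix V V ℝ) (k c : ℝ)
    (hsymm : A.IsSymm)
    (h01 : ∀ i j, A i j = 0 ∨ A i j = 1)
    (hreg : ∀ i, ∑ j, A i j = k)
    (hc : 0 < c) (hck : c < k)
    (heig : ∀ (v : V → ℝ) (lam : ℝ), (∑ i, v i) = 0 → v ≠ 0 →
      A.mulVec v = lam • v → |lam| ≤ c)
    (S : Finset V) (x : V) (r : ℕ)
    (hr : Real.log (2 * (Fintype.card V : ℝ) / Real.sqrt (S.card : ℝ)) /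
        Real.log (k / c) ≤ (r : ℝ)) :
    (S.card : ℝ) / (2 * (Fintype.card V : ℝ)) * k ^ r ≤ ∑ s ∈ S, (A ^ r) s x :=
  stmt_0_general A k c hsymm hreg hc hck heig S x r hr
end

section
/- Let A be a k-regular graph's adjacency matrix on h vertices with all nontrivial eigenvalues bounded by c < k in absolute value, and suppose k, k/(k−c), and h/|S| are each bounded by polynomials in log h. Then there is a polynomial P such that a random walk of length P(log h) from any vertex lands in S with probability ≥ |S|/(2h) ≥ 1/(2·poly(log h)); hence among poly(log h) independent such walks, at least one lands in S with probability ≥ 1/2. -/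
/-!
Write the point mass at `x` as `u + h⁻¹ 𝟙` with `u ⊥ 𝟙`, where `h = |V|`. Since `A` is symmetric
and `A 𝟙 = k 𝟙`, `A` preserves `𝟙ᗮ`, and by the spectral theorem on that subspace it contracts
it by the factor `c`. Hence, by Cauchy–Schwarz, the walk count `∑_{s ∈ S} (A^r)_{s x}` differs
from its mean `|S| k^r / h` by at most `√|S| c^r`. As `log (k/c) ≥ 1 - c/k ≥ 1 / Q₂(log h)`,
a length `r ≥ (log 2 + log h) Q₂(log h)` gives `(c/k)^r ≤ 1/(2h)`, so the error is at most
half the mean. Amplification is `(1 - p)^n ≤ exp (-n p) ≤ 1/2` once `n p ≥ log 2`, and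
`p = |S|/(2h) ≥ 1/(2 Q₃(log h))`.
-/

open Matrix Finset

namespace LinearMap

variable {E : Type*} [NormedAddCommGroup E] [InnerProductSpace ℝ E] {T : E →ₗ[ℝ] E} {c : ℝ}

theorem norm_pow_apply_le_of_mem {W : Submodule ℝ E} (hW : ∀ v ∈ W, T v ∈ W) (hc : 0 ≤ c)
    (hT : ∀ v ∈ W, ‖T v‖ ≤ c * ‖v‖) (r : ℕ) {v : E} (hv : v ∈ W) :
    ‖(T ^ r) v‖ ≤ c ^ r * ‖v‖ := by
  induction r generalizing v with
  | zero => simp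
  | succ r ih =>
    calc ‖(T ^ (r + 1)) v‖ = ‖(T ^ r) (T v)‖ := by rw [pow_succ, Module.End.mul_apply]
      _ ≤ c ^ r * ‖T v‖ := ih (hW v hv)
      _ ≤ c ^ r * (c * ‖v‖) := by gcongr; exact hT v hv
      _ = c ^ (r + 1) * ‖v‖ := by ring

variable [FiniteDimensional ℝ E]

namespace IsSymmetric

theorem norm_apply_le_of_hasEigenvalue (hT : T.IsSymmetric) (hc : 0 ≤ c)
    (hμ : ∀ μ, Module.End.HasEigenvalue T μ → |μ| ≤ c) (v : E) : ‖T v‖ ≤ c * ‖v‖ := by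
  set b := hT.eigenvectorBasis rfl
  have hsq : ‖T v‖ ^ 2 ≤ (c * ‖v‖) ^ 2 := by
    rw [mul_pow, ← b.repr.norm_map, ← b.repr.norm_map v, EuclideanSpace.norm_sq_eq,
      EuclideanSpace.norm_sq_eq, Finset.mul_sum]
    gcongr with i
    rw [hT.eigenvectorBasis_apply_self_apply, norm_mul, mul_pow]
    gcongr
    simpa using hμ _ (hT.hasEigenvalue_eigenvalues rfl i)
  exact (pow_le_pow_iff_left₀ (norm_nonneg _) (by positivity) two_ne_zero).1 hsq

theorem norm_apply_le_of_mem (hT : T.IsSymmetric) {W : Submodule ℝ E} (hW : ∀ v ∈ W, T v ∈ W)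
    (hc : 0 ≤ c) (hμ : ∀ v ∈ W, v ≠ 0 → ∀ μ, T v = μ • v → |μ| ≤ c) {v : E} (hv : v ∈ W) :
    ‖T v‖ ≤ c * ‖v‖ := by
  refine (hT.restrict_invariant hW).norm_apply_le_of_hasEigenvalue hc (fun μ hμW => ?_) ⟨v, hv⟩
  obtain ⟨u, hu, hu0⟩ := hμW.exists_hasEigenvector
  rw [Module.End.mem_eigenspace_iff] at hu
  exact hμ u u.2 (by simpa using hu0) μ (by simpa using congrArg Subtype.val hu)

end IsSymmetric
end LinearMap

namespace EuclideanSpace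

variable {ι : Type*} [Fintype ι]

theorem inner_toLp_one_left (v : EuclideanSpace ℝ ι) :
    inner ℝ (WithLp.toLp 2 (1 : ι → ℝ)) v = ∑ i, v i := by
  simp [PiLp.inner_apply]

theorem mem_orthogonal_toLp_one_iff {v : EuclideanSpace ℝ ι} :
    v ∈ (ℝ ∙ WithLp.toLp 2 (1 : ι → ℝ))ᗮ ↔ ∑ i, v i = 0 := by
  rw [Submodule.mem_orthogonal_singleton_iff_inner_right, inner_toLp_one_left]

theorem abs_sum_le_sqrt_card_mul_norm_s13 (g : EuclideanSpace ℝ ι) (S : Finset ι) :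
    |∑ i ∈ S, g i| ≤ √(#S : ℝ) * ‖g‖ := by
  rw [← Real.sqrt_sq (norm_nonneg g), ← Real.sqrt_mul (Nat.cast_nonneg _)]
  refine Real.abs_le_sqrt ?_
  calc (∑ i ∈ S, g i) ^ 2 ≤ #S * ∑ i ∈ S, g i ^ 2 := sq_sum_le_card_mul_sum_sq
    _ ≤ #S * ∑ i, g i ^ 2 :=
      mul_le_mul_of_nonneg_left (sum_le_univ_sum_of_nonneg fun i => sq_nonneg _) (by positivity)
    _ = #S * ‖g‖ ^ 2 := by simp [EuclideanSpace.norm_sq_eq]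

end EuclideanSpace

namespace Matrix

variable {V : Type*} [Fintype V] {A : Matrix V V ℝ} {k c : ℝ}

theorem mulVec_one_eq (hrow : ∀ i, ∑ j, A i j = k) : A *ᵥ 1 = k • 1 := by
  ext i; simp [mulVec, dotProduct, hrow]

variable [DecidableEq V]

theorem norm_toEuclideanLin_pow_apply_le (hsym : A.IsSymm) (hrow : ∀ i, ∑ j, A i j = k)
    (hc : 0 ≤ c)
    (heig : ∀ (v : V → ℝ) (lam : ℝ), (∑ i, v i) = 0 → v ≠ 0 → A.mulVec v = lam • v → |lam| ≤ c)
    (r : ℕ) {v : EuclideanSpace ℝ V} (hv : ∑ i, v i = 0) :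
    ‖(toEuclideanLin A ^ r) v‖ ≤ c ^ r * ‖v‖ := by
  have hT : (toEuclideanLin A).IsSymmetric :=
    isSymmetric_toEuclideanLin_iff.2 (isHermitian_iff_isSymm.2 hsym)
  have hone : toEuclideanLin A (WithLp.toLp 2 1) = k • WithLp.toLp 2 1 := by
    ext i; simp [mulVec, dotProduct, hrow]
  have hW : ∀ v ∈ (ℝ ∙ WithLp.toLp 2 (1 : V → ℝ))ᗮ,
      toEuclideanLin A v ∈ (ℝ ∙ WithLp.toLp 2 1)ᗮ := by
    intro v hv
    rw [Submodule.mem_orthogonal_singleton_iff_inner_right] at hv ⊢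
    rw [← hT, hone, real_inner_smul_left, hv, mul_zero]
  refine LinearMap.norm_pow_apply_le_of_mem hW hc (fun u hu => ?_) r
    (EuclideanSpace.mem_orthogonal_toLp_one_iff.2 hv)
  refine hT.norm_apply_le_of_mem hW hc (fun u hu hu0 μ huμ => ?_) hu
  exact heig u.ofLp μ (EuclideanSpace.mem_orthogonal_toLp_one_iff.1 hu) (by simpa using hu0)
    (by simpa using congrArg WithLp.ofLp huμ)

theorem pow_mulVec_one_eq (hrow : ∀ i, ∑ j, A i j = k) (r : ℕ) : (A ^ r) *ᵥ 1 = k ^ r • 1 := by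
  induction r with
  | zero => simp
  | succ r ih =>
    rw [pow_succ, ← mulVec_mulVec, mulVec_one_eq hrow, mulVec_smul, ih, smul_smul, pow_succ,
      mul_comm]

theorem abs_sum_pow_apply_sub_le_s13 (hsym : A.IsSymm) (hrow : ∀ i, ∑ j, A i j = k) (hc : 0 ≤ c)
    (heig : ∀ (v : V → ℝ) (lam : ℝ), (∑ i, v i) = 0 → v ≠ 0 → A.mulVec v = lam • v → |lam| ≤ c)
    (S : Finset V) (x : V) (r : ℕ) :
    |∑ s ∈ S, (A ^ r) s x - #S * k ^ r / Fintype.card V| ≤ √(#S : ℝ) * c ^ r := by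
  set h : ℝ := (Fintype.card V : ℝ)
  have hh : 0 < h := by have : Nonempty V := ⟨x⟩; positivity
  set one : EuclideanSpace ℝ V := WithLp.toLp 2 1
  set u : EuclideanSpace ℝ V := PiLp.single 2 x 1 - h⁻¹ • one
  have hu : ∑ i, u i = 0 := by
    simp [u, one, sum_sub_distrib, h, mul_inv_cancel₀ hh.ne']
  have hu1 : ‖u‖ ≤ 1 := by
    have hpyth := norm_add_sq_eq_norm_sq_add_norm_sq_real (x := u) (y := h⁻¹ • one) (by
      rw [real_inner_smul_right, real_inner_comm, EuclideanSpace.inner_toLp_one_left, hu, mul_zero])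
    rw [sub_add_cancel, PiLp.norm_single, norm_one] at hpyth
    nlinarith [norm_nonneg u, sq_nonneg ‖h⁻¹ • one‖]
  have hpow : ∀ s, (A ^ r) s x = (toEuclideanLin A ^ r) u s + k ^ r / h := by
    intro s
    rw [← toLpLin_pow, toLpLin_apply]
    simp [u, one, mulVec_sub, mulVec_smul, pow_mulVec_one_eq hrow]
    ring
  calc |∑ s ∈ S, (A ^ r) s x - #S * k ^ r / h|
      = |∑ s ∈ S, (toEuclideanLin A ^ r) u s| := by simp [hpow, sum_add_distrib]; ring_nf
    _ ≤ √(#S : ℝ) * ‖(toEuclideanLin A ^ r) u‖ := EuclideanSpace.abs_sum_le_sqrt_card_mul_norm_s13 _ _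
    _ ≤ √(#S : ℝ) * (c ^ r * 1) := by
      gcongr
      exact (norm_toEuclideanLin_pow_apply_le hsym hrow hc heig r hu).trans (by gcongr)
    _ = √(#S : ℝ) * c ^ r := by rw [mul_one]

theorem div_card_le_sum_pow_apply_div (hsym : A.IsSymm) (hrow : ∀ i, ∑ j, A i j = k)
    (hc : 0 < c) (hck : c < k)
    (heig : ∀ (v : V → ℝ) (lam : ℝ), (∑ i, v i) = 0 → v ≠ 0 → A.mulVec v = lam • v → |lam| ≤ c)
    {S : Finset V} (hS : S.Nonempty) (x : V) {r : ℕ}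
    (hr : (c / k) ^ r ≤ 1 / (2 * Fintype.card V)) :
    #S / (2 * Fintype.card V) ≤ (∑ s ∈ S, (A ^ r) s x) / k ^ r := by
  set h : ℝ := (Fintype.card V : ℝ)
  have hh : 0 < h := by have : Nonempty V := ⟨x⟩; positivity
  have hk : 0 < k := hc.trans hck
  have hS1 : (1 : ℝ) ≤ #S := by exact_mod_cast hS.card_pos
  have herr : √(#S : ℝ) * c ^ r ≤ #S * k ^ r / (2 * h) :=
    calc √(#S : ℝ) * c ^ r ≤ #S * c ^ r := by gcongr; exact Real.sqrt_le_self_iff.2 (.inr hS1)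
      _ = #S * k ^ r * (c / k) ^ r := by rw [div_pow]; field_simp
      _ ≤ #S * k ^ r * (1 / (2 * h)) := by gcongr
      _ = #S * k ^ r / (2 * h) := by ring
  have hmix := (abs_le.1 (abs_sum_pow_apply_sub_le_s13 hsym hrow hc.le heig S x r)).1
  rw [le_div_iff₀ (by positivity)]
  have hsplit : #S / (2 * h) * k ^ r = #S * k ^ r / h - #S * k ^ r / (2 * h) := by
    field_simp; ring
  linarith

end Matrix

theorem div_pow_le_of_neg_log_mul_le {c k q y : ℝ} {r : ℕ} (hc : 0 < c) (hck : c < k)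
    (hq : k / (k - c) ≤ q) (hy : 0 < y) (hr : -Real.log y * q ≤ r) : (c / k) ^ r ≤ y := by
  have hk : 0 < k := hc.trans hck
  have hq0 : 0 < q := (div_pos hk (sub_pos.2 hck)).trans_le hq
  have hlog : q⁻¹ ≤ Real.log (k / c) :=
    calc q⁻¹ ≤ (k / (k - c))⁻¹ := inv_anti₀ (div_pos hk (sub_pos.2 hck)) hq
      _ = 1 - (k / c)⁻¹ := by field_simp
      _ ≤ Real.log (k / c) := Real.one_sub_inv_le_log_of_pos (div_pos hk hc)
  have hlen : -Real.log y ≤ r * Real.log (k / c) :=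
    calc -Real.log y = -Real.log y * q * q⁻¹ := by field_simp
      _ ≤ r * q⁻¹ := by gcongr
      _ ≤ r * Real.log (k / c) := by gcongr
  rw [← Real.log_le_log_iff (by positivity) hy, Real.log_pow, ← inv_div, Real.log_inv]
  linarith

theorem one_sub_pow_le_half {p : ℝ} {n : ℕ} (hp : p ≤ 1) (hn : Real.log 2 ≤ n * p) :
    (1 - p) ^ n ≤ 1 / 2 :=
  calc (1 - p) ^ n ≤ Real.exp (-p) ^ n :=
        pow_le_pow_left₀ (sub_nonneg.2 hp) (Real.one_sub_le_exp_neg p) n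
    _ = Real.exp (-(n * p)) := by rw [← Real.exp_nat_mul]; ring_nf
    _ ≤ Real.exp (-Real.log 2) := Real.exp_le_exp.2 (neg_le_neg hn)
    _ = 1 / 2 := by rw [Real.exp_neg, Real.exp_log two_pos, one_div]

/-- Rapid mixing with amplification: for a family of `k`-regular graphs with nontrivial
eigenvalues bounded by `c < k`, if `k`, `k/(k−c)` and `h/|S|` are bounded by fixed
polynomials in `log h`, then there are polynomials `P`, `M` such that a random walk of any
length `≥ P(log h)` lands in `S` with probability at least `|S|/(2h)`, and among
`⌈M(log h)⌉` independent such walks at least one lands in `S` with probability `≥ 1/2`. -/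
theorem stmt_13 (Q₁ Q₂ Q₃ : Polynomial ℝ) :
    ∃ P M : Polynomial ℝ,
      ∀ (V : Type) [Fintype V] [DecidableEq V],
        ∀ (A : Matrix V V ℝ) (k c : ℝ) (S : Finset V) (x : V),
        A.IsSymm →
        (∀ i j, A i j = 0 ∨ A i j = 1) →
        (∀ i, ∑ j, A i j = k) →
        0 < c → c < k →
        (∀ (v : V → ℝ) (lam : ℝ), (∑ i, v i) = 0 → v ≠ 0 →
          A.mulVec v = lam • v → |lam| ≤ c) →
        S.Nonempty →
        k ≤ Q₁.eval (Real.log (Fintype.card V)) →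
        k / (k - c) ≤ Q₂.eval (Real.log (Fintype.card V)) →
        (Fintype.card V : ℝ) / (S.card : ℝ) ≤ Q₃.eval (Real.log (Fintype.card V)) →
        ∀ r : ℕ, P.eval (Real.log (Fintype.card V)) ≤ (r : ℝ) →
          -- a single walk of length `r` lands in `S` with probability ≥ |S|/(2h)
          (S.card : ℝ) / (2 * (Fintype.card V : ℝ)) ≤ (∑ s ∈ S, (A ^ r) s x) / k ^ r
          -- amplification: `⌈M(log h)⌉` independent walks miss `S` with probability ≤ 1/2
          ∧ (1 - (S.card : ℝ) / (2 * (Fintype.card V : ℝ)))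
              ^ ⌈M.eval (Real.log (Fintype.card V))⌉₊ ≤ 1 / 2 := by
  refine ⟨(.C (Real.log 2) + .X) * Q₂, .C (2 * Real.log 2) * Q₃, ?_⟩
  intro V _ _ A k c S x hsym _ hrow hc hck heig hS _ hQ₂ hQ₃ r hr
  set h : ℝ := (Fintype.card V : ℝ)
  have hh : 0 < h := by have : Nonempty V := ⟨x⟩; positivity
  have hSpos : (0 : ℝ) < #S := by exact_mod_cast hS.card_pos
  refine ⟨div_card_le_sum_pow_apply_div hsym hrow hc hck heig hS x ?_, one_sub_pow_le_half ?_ ?_⟩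
  · refine div_pow_le_of_neg_log_mul_le hc hck hQ₂ (by positivity) ?_
    rw [one_div, Real.log_inv, neg_neg, Real.log_mul two_ne_zero hh.ne']
    simpa using hr
  · rw [div_le_one (by positivity)]
    have : (#S : ℝ) ≤ h := by simpa [h] using (Nat.cast_le (α := ℝ)).2 (card_le_univ S)
    linarith
  · calc Real.log 2 = 2 * Real.log 2 * (h / #S) * (#S / (2 * h)) := by field_simp
      _ ≤ 2 * Real.log 2 * Q₃.eval (Real.log h) * (#S / (2 * h)) := by gcongr
      _ ≤ _ := by gcongr; simpa using Nat.le_ceil _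
end
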